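/- arXiv:2203.12665 — 4 statements merged into one kernel-verified Lean document; each statement's English description precedes it below -/
import Mathlib

section
/- If a connected graph G contains a nontrivial bridge xy, then there is no hamiltonian path from x to y in the square G²; in particular G² is not hamiltonian connected. -/
open SimpleGraph Function

variable {V : Type*}

/-- The square of a graph `G`: two distinct vertices are adjacent iff their distance
in `G` is at most 2, i.e. they are adjacent in `G` or have a common neighbor. -/
def GraphSquare (G : SimpleGraph V) : SimpleGraph V where
  Adj u v := u ≠ v ∧ (G.Adj u v ∨ ∃ w, G.Adj u w ∧ G.Adj w v)
  symm := by
    constructor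
    rintro u v ⟨hne, h | ⟨w, h1, h2⟩⟩
    · exact ⟨hne.symm, Or.inl h.symm⟩
    · exact ⟨hne.symm, Or.inr ⟨w, h2.symm, h1.symm⟩⟩
  loopless := ⟨fun v h => h.1 rfl⟩

/-- A leaf of `G` is a vertex with exactly one neighbor. -/
def IsLeafVertex (G : SimpleGraph V) (v : V) : Prop := ∃! w, G.Adj v w

/-- A nontrivial bridge of `G` is a bridge neither of whose endpoints is a leaf. -/
def IsNontrivialBridge (G : SimpleGraph V) (x y : V) : Prop :=
  G.IsBridge s(x, y) ∧ ¬ IsLeafVertex G x ∧ ¬ IsLeafVertex G y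

/-- `bn G i` is the number of nontrivial bridges of `G` incident with `i`. -/
noncomputable def bn (G : SimpleGraph V) (i : V) : ℕ :=
  {v : V | IsNontrivialBridge G i v}.ncard

/-- A cutvertex of a connected graph is a vertex whose removal disconnects the graph. -/
def IsCutVertex (G : SimpleGraph V) (v : V) : Prop :=
  G.Connected ∧ ({u : V | u ≠ v}).Nonempty ∧ ¬ (G.induce {u : V | u ≠ v}).Connected

/-- A block of `G`: a maximal set of vertices inducing a connected subgraph
without a cutvertex of its own. -/
def IsBlock (G : SimpleGraph V) (B : Set V) : Prop :=
  (G.induce B).Connected ∧ (∀ v, ¬ IsCutVertex (G.induce B) v) ∧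
    ∀ C : Set V, B ⊆ C → (G.induce C).Connected →
      (∀ v, ¬ IsCutVertex (G.induce C) v) → C = B

/-- A 2-block of `G`: a block with more than two vertices. -/
def Is2Block (G : SimpleGraph V) (B : Set V) : Prop :=
  IsBlock G B ∧ 2 < B.ncard

/-- The number `k_i` of 2-blocks of `G` containing `i`. -/
noncomputable def numTwoBlocksAt (G : SimpleGraph V) (i : V) : ℕ :=
  {B : Set V | Is2Block G B ∧ i ∈ B}.ncard

/-- The set of cutvertices of `G`. -/
def cutvertexSet (G : SimpleGraph V) : Set V := {v | IsCutVertex G v}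

/-- The block-cutvertex graph of `G`: the bipartite graph on the blocks and the
cutvertices of `G`, a block being adjacent to a cutvertex exactly when the
cutvertex belongs to the block. -/
def bcGraph (G : SimpleGraph V) :
    SimpleGraph ({B : Set V // IsBlock G B} ⊕ {v : V // IsCutVertex G v}) where
  Adj a b := ∃ B v, v.1 ∈ B.1 ∧
      ((a = Sum.inl B ∧ b = Sum.inr v) ∨ (a = Sum.inr v ∧ b = Sum.inl B))
  symm := by
    constructor
    rintro a b ⟨B, v, hv, (⟨rfl, rfl⟩ | ⟨rfl, rfl⟩)⟩
    · exact ⟨B, v, hv, Or.inr ⟨rfl, rfl⟩⟩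
    · exact ⟨B, v, hv, Or.inl ⟨rfl, rfl⟩⟩
  loopless := by
    constructor
    rintro a ⟨B, v, hv, (⟨rfl, h⟩ | ⟨rfl, h⟩)⟩ <;> simp at h

/-- A graph is hamiltonian if it contains a hamiltonian cycle. -/
def HasHamiltonianCycle (H : SimpleGraph V) : Prop :=
  letI : DecidableEq V := Classical.decEq V
  ∃ (a : V) (c : H.Walk a a), c.IsHamiltonianCycle

/-- There is a hamiltonian path from `x` to `y` in `H`. -/
def HasHamiltonianPath (H : SimpleGraph V) (x y : V) : Prop :=
  letI : DecidableEq V := Classical.decEq V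
  ∃ p : H.Walk x y, p.IsHamiltonian

/-- A graph is hamiltonian connected if any two distinct vertices are joined by a
hamiltonian path. -/
def HamiltonianConnected (H : SimpleGraph V) : Prop :=
  ∀ u v : V, u ≠ v → HasHamiltonianPath H u v

/-- A 2-connected graph (equivalently, a "2-block" regarded as a graph on its own):
a connected graph on at least three vertices without a cutvertex. -/
def IsTwoConnectedGraph [Fintype V] (G : SimpleGraph V) : Prop :=
  3 ≤ Fintype.card V ∧ G.Connected ∧ ∀ v, ¬ IsCutVertex G v

/-- A graph `H` on `n` vertices is panconnected if for every pair of distinct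
vertices `u`, `v` and every `l` with `dist u v ≤ l ≤ n - 1` there is a `u`-`v`
path of length exactly `l`. -/
def Panconnected [Fintype V] (H : SimpleGraph V) : Prop :=
  ∀ u v : V, u ≠ v → ∀ l : ℕ, H.dist u v ≤ l → l ≤ Fintype.card V - 1 →
    ∃ p : H.Walk u v, p.IsPath ∧ p.length = l

/-- A graph `H` on `n` vertices is vertex-pancyclic if every vertex lies on a cycle
of length `l` for every `3 ≤ l ≤ n`. -/
def VertexPancyclic [Fintype V] (H : SimpleGraph V) : Prop :=
  ∀ v : V, ∀ l : ℕ, 3 ≤ l → l ≤ Fintype.card V →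
    ∃ c : H.Walk v v, c.IsCycle ∧ c.length = l

/-- A caterpillar: a tree in which every vertex is within distance 1 of a spine path. -/
def IsCaterpillar (T : SimpleGraph V) : Prop :=
  T.IsTree ∧ ∃ (u v : V) (P : T.Walk u v), P.IsPath ∧
    ∀ w : V, w ∈ P.support ∨ ∃ z ∈ P.support, T.Adj w z

/-- An innerblock of `G`: a block which is not an endblock, i.e. a block containing
at least two cutvertices of `G`. -/
def IsInnerBlock (G : SimpleGraph V) (B : Set V) : Prop :=
  IsBlock G B ∧ 2 ≤ {i : V | IsCutVertex G i ∧ i ∈ B}.ncard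

/-- A block-chain: a connected graph whose block-cutvertex graph is a path. -/
def IsBlockChain (G : SimpleGraph V) : Prop :=
  G.Connected ∧ ∃ n : ℕ, Nonempty (bcGraph G ≃g pathGraph n)

/-!
Delete the bridge `xy` and let `A` be the component of `x`. The only edge of `G` between `A` and
its complement is `xy`, so every edge of `G²` leaving `A` starts at `x` or ends at `y`. A path in
`G²` from `x` to `y` can therefore leave `A` only at its first or at its last step: it misses
either a neighbour `x' ≠ y` of `x`, which lies in `A`, or a neighbour `y' ≠ x` of `y`, which
does not. Such neighbours exist because neither `x` nor `y` is a leaf.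
-/

namespace SimpleGraph.Walk

variable {H : SimpleGraph V} {S : Set V} {x y : V}
  (hS : ∀ a b, H.Adj a b → a ∈ S → b ∉ S → a = x ∨ b = y)
include hS

theorem IsPath.forall_notMem_of_start_notMem {u : V} {p : H.Walk u y} (hp : p.IsPath)
    (hx : x ∉ p.support) (hu : u ∉ S) : ∀ b ∈ p.support, b ∉ S := by
  induction p with
  | nil => simpa using hu
  | @cons u w _ h q ih =>
    rw [cons_isPath_iff] at hp
    rw [support_cons, List.mem_cons, not_or] at hx
    have hw : w ∉ S := by
      intro hw
      rcases hS w u h.symm hw hu with rfl | rfl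
      · exact hx.2 q.start_mem_support
      · exact hp.2 q.end_mem_support
    simpa [hu] using ih hS hp.1 hx.2 hw

theorem IsPath.forall_mem_or_eq_of_start_mem {u : V} {p : H.Walk u y} (hp : p.IsPath)
    (hx : x ∉ p.support) (hu : u ∈ S) : ∀ b ∈ p.support, b ∈ S ∨ b = y := by
  induction p with
  | nil => simp
  | @cons u w _ h q ih =>
    rw [cons_isPath_iff] at hp
    rw [support_cons, List.mem_cons, not_or] at hx
    by_cases hw : w ∈ S
    · simpa [hu] using ih hS hp.1 hx.2 hw
    · rcases hS u w h hu hw with rfl | rfl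
      · exact absurd rfl hx.1
      · obtain rfl := (isPath_iff_nil.mp hp.1).eq_nil
        simp [hu]

theorem IsPath.leaves_at_start_or_end {p : H.Walk x y} (hp : p.IsPath) (hx : x ∈ S) :
    (∀ b ∈ p.support, b ≠ x → b ∉ S) ∨ (∀ b ∈ p.support, b ≠ y → b ∈ S) := by
  cases p with
  | nil => exact Or.inl fun b hb hbx => absurd (by simpa using hb) hbx
  | @cons _ w _ h q =>
    rw [cons_isPath_iff] at hp
    by_cases hw : w ∈ S
    · refine Or.inr fun b hb hby => ?_
      rw [support_cons, List.mem_cons] at hb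
      rcases hb with rfl | hb
      · exact hx
      · exact (hp.1.forall_mem_or_eq_of_start_mem hS hp.2 hw b hb).resolve_right hby
    · refine Or.inl fun b hb hbx => ?_
      rw [support_cons, List.mem_cons] at hb
      exact hp.1.forall_notMem_of_start_notMem hS hp.2 hw b (hb.resolve_left hbx)

end SimpleGraph.Walk

section

variable {G : SimpleGraph V} {x y : V}

theorem deleteEdges_adj_of_ne {a b : V} (hab : G.Adj a b) (h : s(a, b) ≠ s(x, y)) :
    (G.deleteEdges {s(x, y)}).Adj a b :=
  deleteEdges_adj.2 ⟨hab, h⟩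

theorem eq_and_eq_of_adj_of_reachable_deleteEdges {a b : V} (hab : G.Adj a b)
    (ha : (G.deleteEdges {s(x, y)}).Reachable x a)
    (hb : ¬ (G.deleteEdges {s(x, y)}).Reachable x b) : a = x ∧ b = y := by
  have h : s(a, b) = s(x, y) := by
    by_contra h
    exact hb (ha.trans (deleteEdges_adj_of_ne hab h).reachable)
  rcases Sym2.eq_iff.mp h with h | ⟨rfl, rfl⟩
  · exact h
  · exact absurd (Reachable.refl _) hb

theorem eq_or_eq_of_graphSquare_adj {S : Set V}
    (hS : ∀ a b, G.Adj a b → a ∈ S → b ∉ S → a = x ∧ b = y) :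
    ∀ a b, (GraphSquare G).Adj a b → a ∈ S → b ∉ S → a = x ∨ b = y := by
  rintro a b ⟨-, hab | ⟨w, haw, hwb⟩⟩ ha hb
  · exact Or.inl (hS a b hab ha hb).1
  · by_cases hw : w ∈ S
    · exact Or.inr (hS w b hwb hw hb).2
    · exact Or.inl (hS a w haw ha hw).1

theorem exists_adj_ne_of_not_isLeafVertex (hx : ¬ IsLeafVertex G x) (hxy : G.Adj x y) :
    ∃ z, G.Adj x z ∧ z ≠ y := by
  by_contra! h
  exact hx ⟨y, hxy, h⟩

end

theorem not_hamiltonian_connected_of_nontrivial_bridge_general (G : SimpleGraph V)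
    (hG : G.Connected) (x y : V) (hxy : IsNontrivialBridge G x y) :
    ¬ HasHamiltonianPath (GraphSquare G) x y ∧
      ¬ HamiltonianConnected (GraphSquare G) := by
  obtain ⟨hbr, hx, hy⟩ := hxy
  have hadj : G.Adj x y := hbr.reachable_iff_adj.mp (hG.preconnected x y)
  set A := {u | (G.deleteEdges {s(x, y)}).Reachable x u}
  have hA := eq_or_eq_of_graphSquare_adj (S := A) fun _ _ hab ha hb =>
    eq_and_eq_of_adj_of_reachable_deleteEdges hab ha hb
  obtain ⟨x', hxx', hx'y⟩ := exists_adj_ne_of_not_isLeafVertex hx hadj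
  obtain ⟨y', hyy', hy'x⟩ := exists_adj_ne_of_not_isLeafVertex hy hadj.symm
  have hx'A : x' ∈ A :=
    (deleteEdges_adj_of_ne hxx' (by simp [hx'y, hadj.ne])).reachable
  have hy'A : y' ∉ A := fun h =>
    hbr (h.trans (deleteEdges_adj_of_ne hyy'.symm (by simp [hy'x, hyy'.ne'])).reachable)
  have hpath : ¬ HasHamiltonianPath (GraphSquare G) x y := by
    classical
    rintro ⟨p, hp⟩
    rcases hp.isPath.leaves_at_start_or_end hA (Reachable.refl x) with hout | hin
    · exact hout x' (hp.mem_support x') hxx'.ne' hx'A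
    · exact hy'A (hin y' (hp.mem_support y') hyy'.ne')
  exact ⟨hpath, fun h => hpath (h x y hadj.ne)⟩

/-- If a connected graph `G` has a nontrivial bridge `xy`, then there is no hamiltonian
path from `x` to `y` in `G²`; in particular `G²` is not hamiltonian connected. -/
theorem not_hamiltonian_connected_of_nontrivial_bridge [Fintype V] (G : SimpleGraph V)
    (hG : G.Connected) (x y : V) (hxy : IsNontrivialBridge G x y) :
    ¬ HasHamiltonianPath (GraphSquare G) x y ∧
      ¬ HamiltonianConnected (GraphSquare G) :=
  not_hamiltonian_connected_of_nontrivial_bridge_general G hG x y hxy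
end

section
/- Let T be a caterpillar with at least three vertices and let P = x₁x₂...x_m be a longest path in T. Then the square T² contains a hamiltonian cycle which contains the edges x₁x₂ and x_{m−1}x_m and, for each j = 2, 3, ..., m−1, a further edge u_j v_j such that u_j and v_j are neighbors of x_j in T, these edges all being pairwise distinct. -/
open SimpleGraph Function

variable {V : Type*}

/-!
Let `P = x₀ ⋯ xₙ` be a longest path of the caterpillar `T`. A vertex off `P` is a leaf hanging at
an inner vertex of `P`: otherwise the path from it to `P`, of length at least two, and the two
halves of `P` at its foot `xᵢ`, of length at least two by maximality, form a subdivided claw, which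
a caterpillar cannot contain: the centre and the three middle vertices, each having two
neighbours, would all lie on its spine, where a vertex has at most two neighbours.

The hamiltonian cycle of `T²` is assembled from the far end of `P`. If `Hᵢ` runs from `xᵢ` to
`xᵢ₊₁` through `xᵢ, …, xₙ` and the leaves at `xᵢ₊₁, …, xₙ₋₁`, then `Hᵢ₋₁` is `xᵢ₋₁`, the leaves
at `xᵢ`, and `Hᵢ` reversed: every step stays within distance two through `xᵢ`. The edge `x₀x₁`
closes `H₀` into a cycle. The edge chosen for `xⱼ` is the first step of `Hⱼ₋₁`; its ends are
neighbours of `xⱼ`, and as two vertices of a tree have at most one common neighbour and two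
neighbours of a vertex are never adjacent, these edges are pairwise distinct and differ from the
path edges `x₀x₁` and `xₙ₋₁xₙ`.
-/

def zigzag (leg : V → List V) : List V → List V
  | a :: b :: c :: t => a :: (leg b ++ (zigzag leg (b :: c :: t)).reverse)
  | l => l

def IsConsecutive (l : List V) (x y : V) : Prop := [x, y] <:+: l ∨ [y, x] <:+: l

lemma IsConsecutive.reverse {l : List V} {x y : V} (h : IsConsecutive l x y) :
    IsConsecutive l.reverse x y :=
  h.symm.imp List.reverse_infix.mpr List.reverse_infix.mpr

lemma IsConsecutive.mono {l l' : List V} {x y : V} (h : IsConsecutive l x y) (hl : l <:+: l') :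
    IsConsecutive l' x y :=
  h.imp (·.trans hl) (·.trans hl)

section Zigzag

variable (leg : V → List V)

@[simp] lemma zigzag_cons_cons_cons (a b c : V) (t : List V) :
    zigzag leg (a :: b :: c :: t) = a :: (leg b ++ (zigzag leg (b :: c :: t)).reverse) := by
  rw [zigzag]

lemma exists_zigzag_eq (a b : V) (t : List V) :
    ∃ mid, zigzag leg (a :: b :: t) = a :: (mid ++ [b]) := by
  induction t generalizing a b with
  | nil => exact ⟨[], rfl⟩
  | cons c t ih =>
    obtain ⟨mid, h⟩ := ih b c
    exact ⟨leg b ++ c :: mid.reverse, by simp [h]⟩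

lemma mem_zigzag {w : V} : ∀ {l : List V},
    w ∈ zigzag leg l ↔ w ∈ l ∨ ∃ y ∈ l.tail.dropLast, w ∈ leg y
  | [] | [_] | [_, _] => by simp [zigzag]
  | a :: b :: c :: t => by
    simp only [zigzag_cons_cons_cons, List.mem_cons, List.mem_append, List.mem_reverse,
      mem_zigzag (l := b :: c :: t), List.tail_cons, List.dropLast_cons_cons, or_and_right,
      exists_or, exists_eq_left]
    tauto

lemma nodup_zigzag : ∀ {l : List V}, l.Nodup → (∀ y ∈ l, (leg y).Nodup) →
    (∀ y ∈ l, ∀ w ∈ leg y, w ∉ l) → (∀ y ∈ l, ∀ y' ∈ l, ∀ w ∈ leg y, w ∈ leg y' → y = y') →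
    (zigzag leg l).Nodup
  | [], h, _, _, _ | [_], h, _, _, _ | [_, _], h, _, _, _ => h
  | a :: b :: c :: t, hl, hleg, hoff, hdisj => by
    obtain ⟨ha, hl'⟩ := List.nodup_cons.mp hl
    have hb : b ∉ c :: t := (List.nodup_cons.mp hl').1
    have ih := nodup_zigzag hl' (fun y hy => hleg y (.tail _ hy))
      (fun y hy w hw hw' => hoff y (.tail _ hy) w hw (.tail _ hw'))
      (fun y hy y' hy' => hdisj y (.tail _ hy) y' (.tail _ hy'))
    have hinner {y} (hy : y ∈ (c :: t).dropLast) : y ∈ a :: b :: c :: t :=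
      .tail _ (.tail _ (List.dropLast_subset _ hy))
    rw [zigzag_cons_cons_cons, List.nodup_cons, List.nodup_append]
    refine ⟨?_, hleg b (by simp), List.nodup_reverse.mpr ih, ?_⟩
    · simp only [List.mem_append, List.mem_reverse, mem_zigzag, List.tail_cons]
      rintro (h | h | ⟨y, hy, h⟩)
      · exact hoff b (by simp) a h (by simp)
      · exact ha h
      · exact hoff y (hinner hy) a h (by simp)
    · rintro w hw _ hw' rfl
      simp only [List.mem_reverse, mem_zigzag, List.tail_cons] at hw'
      rcases hw' with h | ⟨y, hy, h⟩
      · exact hoff b (by simp) w hw (.tail _ h)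
      · obtain rfl := hdisj b (by simp) y (hinner hy) w hw h
        exact hb (List.dropLast_subset _ hy)

lemma isChain_zigzag {G : SimpleGraph V} : ∀ {l : List V}, l.IsChain G.Adj →
    (∀ y ∈ l, ∀ w ∈ leg y, G.Adj y w) →
    (zigzag leg l).IsChain (fun x y => G.Adj x y ∨ ∃ z, G.Adj x z ∧ G.Adj z y)
  | [], h, _ | [_], h, _ | [_, _], h, _ => h.imp fun _ _ => Or.inl
  | a :: b :: c :: t, hl, hleg => by
    obtain ⟨mid, hZ⟩ := exists_zigzag_eq leg b c t
    have ih := isChain_zigzag hl.tail fun y hy => hleg y (.tail _ hy)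
    have hnbr : ∀ x ∈ a :: leg b, G.Adj b x := by
      rintro x (_ | ⟨_, hx⟩)
      · exact hl.rel.symm
      · exact hleg b (by simp) x hx
    rw [zigzag_cons_cons_cons, ← List.cons_append, List.isChain_append, List.isChain_reverse]
    refine ⟨List.Pairwise.isChain (List.pairwise_of_forall_mem_list fun x hx y hy =>
      Or.inr ⟨b, (hnbr x hx).symm, hnbr y hy⟩), ?_, ?_⟩
    · exact ih.imp fun x y h => h.imp G.adj_symm fun ⟨z, hxz, hzy⟩ => ⟨z, hzy.symm, hxz.symm⟩
    · intro x hx y hy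
      obtain rfl : c = y := by simpa [hZ] using hy
      exact Or.inr ⟨b, (hnbr x (List.mem_of_getLast? hx)).symm, hl.tail.rel⟩

lemma isConsecutive_zigzag_getD (d : V) : ∀ {l : List V} {i : ℕ}, i + 2 < l.length →
    IsConsecutive (zigzag leg l) (l.getD i d) ((leg (l.getD (i + 1) d)).headD (l.getD (i + 2) d))
  | a :: b :: c :: t, 0, _ => by
    obtain ⟨mid, hZ⟩ := exists_zigzag_eq leg b c t
    refine Or.inl (List.IsPrefix.isInfix ?_)
    cases h : leg b <;> simp [hZ, h]
  | a :: b :: c :: t, i + 1, hi => by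
    have ih := isConsecutive_zigzag_getD d (l := b :: c :: t) (i := i) (by simpa using hi)
    simp only [List.getD_cons_succ, zigzag_cons_cons_cons]
    exact ih.reverse.mono ((List.suffix_append _ _).trans (List.suffix_cons _ _)).isInfix

lemma isConsecutive_zigzag_getD_last (d : V) : ∀ {l : List V}, 2 ≤ l.length →
    IsConsecutive (zigzag leg l) (l.getD (l.length - 2) d) (l.getD (l.length - 1) d)
  | [a, b], _ => Or.inl (by simp [zigzag])
  | a :: b :: c :: t, _ => by
    have ih := isConsecutive_zigzag_getD_last d (l := b :: c :: t) (by simp)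
    simp only [List.length_cons, Nat.add_sub_cancel, List.getD_cons_succ, zigzag_cons_cons_cons]
      at ih ⊢
    exact ih.reverse.mono ((List.suffix_append _ _).trans (List.suffix_cons _ _)).isInfix

end Zigzag

namespace SimpleGraph

variable {G : SimpleGraph V}

lemma isChain_graphSquare_adj {l : List V}
    (hl : l.IsChain fun x y => G.Adj x y ∨ ∃ z, G.Adj x z ∧ G.Adj z y) (hnd : l.Nodup) :
    l.IsChain (GraphSquare G).Adj := by
  have hne : l.IsChain (· ≠ ·) := List.Pairwise.isChain hnd
  rw [List.isChain_iff_forall_rel_of_append_cons_cons] at hl hne ⊢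
  exact fun _ _ _ _ h => ⟨hne h, hl h⟩

namespace Walk

lemma support_getD_eq_getVert {u v : V} (p : G.Walk u v) {i : ℕ} (hi : i ≤ p.length) (d : V) :
    p.support.getD i d = p.getVert i := by
  rw [List.getD_eq_getElem _ _ (by simp; omega), support_getElem_eq_getVert]

lemma adj_support_getD {u v : V} (p : G.Walk u v) {i : ℕ} (hi : i < p.length) (d : V) :
    G.Adj (p.support.getD i d) (p.support.getD (i + 1) d) := by
  rw [p.support_getD_eq_getVert hi.le, p.support_getD_eq_getVert hi]
  exact p.adj_getVert_succ hi

noncomputable def offSupportNeighbors [Fintype V] {u v : V} (p : G.Walk u v) (y : V) : List V := by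
  classical exact (Finset.univ.filter fun w => w ∉ p.support ∧ G.Adj y w).toList

lemma mem_offSupportNeighbors [Fintype V] {u v y w : V} {p : G.Walk u v} :
    w ∈ p.offSupportNeighbors y ↔ w ∉ p.support ∧ G.Adj y w := by
  classical
  simp [offSupportNeighbors]

lemma nodup_offSupportNeighbors [Fintype V] {u v : V} (p : G.Walk u v) (y : V) :
    (p.offSupportNeighbors y).Nodup := by
  classical exact Finset.nodup_toList _

lemma mem_support_tail_dropLast {u v z : V} {p : G.Walk u v} (hz : z ∈ p.support)
    (hzu : z ≠ u) (hzv : z ≠ v) : z ∈ p.support.tail.dropLast := by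
  cases p with
  | nil => simp_all
  | cons _ q =>
    rw [support_cons, List.tail_cons]
    exact List.mem_dropLast_of_mem_of_ne_getLast ((List.mem_cons.mp hz).resolve_left hzu)
      (by rwa [getLast_support])

lemma IsPath.append_of_forall_mem {a b c : V} {p : G.Walk a b} {q : G.Walk b c}
    (hp : p.IsPath) (hq : q.IsPath) (h : ∀ x ∈ p.support, x ∈ q.support → x = b) :
    (p.append q).IsPath := by
  have hq' := hq.support_nodup
  rw [← q.cons_tail_support, List.nodup_cons] at hq'
  rw [isPath_def, support_append]
  refine hp.support_nodup.append hq'.2 fun x hx hx' => hq'.1 ?_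
  exact h x hx (List.mem_of_mem_tail hx') ▸ hx'

lemma exists_isPath_first_mem (S : Set V) {a b : V} (p : G.Walk a b) (hb : b ∈ S) :
    ∃ c ∈ S, ∃ q : G.Walk a c, q.IsPath ∧ ∀ x ∈ q.support, x ∈ S → x = c := by
  classical
  induction p with
  | nil => exact ⟨_, hb, nil, .nil, by simp⟩
  | @cons a a' b h p ih =>
    obtain ⟨c, hc, q, -, hq⟩ := ih hb
    by_cases ha : a ∈ S
    · exact ⟨a, ha, nil, .nil, by simp⟩
    refine ⟨c, hc, (cons h q).bypass, bypass_isPath _, fun x hx hxS => ?_⟩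
    rcases List.mem_cons.mp (support_bypass_subset_support _ hx) with rfl | hx
    · exact absurd hxS ha
    · exact hq x hx hxS

lemma IsHamiltonian.isHamiltonianCycle_cons [DecidableEq V] {a b : V} {p : G.Walk a b}
    (hp : p.IsHamiltonian) (h : G.Adj b a) (hlen : p.length ≠ 1) :
    (cons h p).IsHamiltonianCycle :=
  ⟨(cons_isCycle_iff p h).mpr ⟨hp.isPath, fun he =>
    hlen (hp.isPath.length_eq_one_of_mem_edges (by rwa [Sym2.eq_swap]))⟩,
    by simpa [IsHamiltonian] using hp⟩

end Walk

namespace IsAcyclic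

open Walk

lemma notMem_edgeSet_of_forall_mem_adj (hG : G.IsAcyclic) {c : V} {e : Sym2 V}
    (he : ∀ w ∈ e, G.Adj c w) : e ∉ G.edgeSet := by
  classical
  induction e using Sym2.ind with
  | h x y =>
    exact fun hxy => hG.cliqueFree le_rfl {c, x, y}
      (is3Clique_triple_iff.mpr ⟨he x (by simp), he y (by simp), hxy⟩)

lemma eq_of_forall_mem_adj (hG : G.IsAcyclic) {c c' : V} {e : Sym2 V} (he : ¬ e.IsDiag)
    (hc : ∀ w ∈ e, G.Adj c w) (hc' : ∀ w ∈ e, G.Adj c' w) : c = c' := by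
  induction e using Sym2.ind with
  | h x y =>
    have hxy : x ≠ y := by simpa using he
    have hx := hc x (by simp); have hy := hc y (by simp)
    have hx' := hc' x (by simp); have hy' := hc' y (by simp)
    have := (hG.subsingleton_path x y).elim
      ⟨cons hx.symm (cons hy nil), by simp [cons_isPath_iff, hxy, hx.ne', hy.ne]⟩
      ⟨cons hx'.symm (cons hy' nil), by simp [cons_isPath_iff, hxy, hx'.ne', hy'.ne]⟩
    simp only [Subtype.mk.injEq, cons.injEq] at this
    exact this.1

lemma support_subset_of_isPath (hG : G.IsAcyclic) {u v a b : V} {p : G.Walk u v}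
    (hp : p.IsPath) {q : G.Walk a b} (hq : q.IsPath) (ha : a ∈ p.support) (hb : b ∈ p.support) :
    q.support ⊆ p.support := by
  classical
  rw [← p.take_spec ha, mem_support_append_iff] at hb
  rcases hb with hb | hb
  · have h : q.reverse = _ := congrArg Subtype.val <| (hG.subsingleton_path b a).elim
      ⟨q.reverse, hq.reverse⟩ ⟨_, (hp.takeUntil ha).dropUntil hb⟩
    intro x hx
    have hx' : x ∈ q.reverse.support := by simpa using hx
    rw [h] at hx'
    exact support_takeUntil_subset_support _ _ (support_dropUntil_subset_support _ _ hx')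
  · obtain rfl : q = _ := congrArg Subtype.val <| (hG.subsingleton_path a b).elim
      ⟨q, hq⟩ ⟨_, (hp.dropUntil ha).takeUntil hb⟩
    exact fun x hx =>
      support_dropUntil_subset_support _ _ (support_takeUntil_subset_support _ _ hx)

lemma eq_of_adj_of_notMem_support (hG : G.IsAcyclic) {u v y y' w : V} {p : G.Walk u v}
    (hp : p.IsPath) (hy : y ∈ p.support) (hy' : y' ∈ p.support) (hw : w ∉ p.support)
    (h : G.Adj y w) (h' : G.Adj y' w) : y = y' := by
  by_contra hne
  have hq : (cons h (cons h'.symm nil)).IsPath := by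
    simp [cons_isPath_iff, hne, h.ne, h'.ne']
  exact hw (hG.support_subset_of_isPath hp hq hy hy' (by simp))

lemma exists_pair_of_adj_mem_support (hG : G.IsAcyclic) {u v x : V} {p : G.Walk u v}
    (hp : p.IsPath) (hx : x ∈ p.support) :
    ∃ a b, ∀ y ∈ p.support, G.Adj x y → y = a ∨ y = b := by
  classical
  refine ⟨(p.takeUntil x hx).penultimate, (p.dropUntil x hx).snd, fun y hy hxy => ?_⟩
  rw [← p.take_spec hx, mem_support_append_iff] at hy
  exact hy.imp (hG.eq_penultimate_of_adj_end (hp.takeUntil hx) hxy)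
    (hG.eq_snd_of_adj_start (hp.dropUntil hx) hxy)

lemma mem_support_of_adj_of_adj (hG : G.IsAcyclic) {u v z y₁ y₂ : V} {Q : G.Walk u v}
    (hQ : Q.IsPath) (hdom : ∀ w, w ∈ Q.support ∨ ∃ z ∈ Q.support, G.Adj w z)
    (h₁ : G.Adj z y₁) (h₂ : G.Adj z y₂) (hne : y₁ ≠ y₂) : z ∈ Q.support := by
  by_contra hz
  obtain ⟨z', hz', hzz'⟩ := (hdom z).resolve_left hz
  obtain ⟨y, hy, hyz'⟩ : ∃ y, G.Adj z y ∧ y ≠ z' := by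
    by_cases h : y₁ = z'
    · exact ⟨y₂, h₂, h ▸ hne.symm⟩
    · exact ⟨y₁, h₁, h⟩
  have hz'z : z' ≠ z := fun h => hz (h ▸ hz')
  by_cases hyQ : y ∈ Q.support
  · have hq : (cons hzz'.symm (cons hy nil)).IsPath := by
      simp [cons_isPath_iff, hz'z, hyz'.symm, hy.ne]
    exact hz (hG.support_subset_of_isPath hQ hq hz' hyQ (by simp))
  obtain ⟨y', hy', hyy'⟩ := (hdom y).resolve_left hyQ
  have hy'z' : y' ≠ z' := fun h => hG.notMem_edgeSet_of_forall_mem_adj (c := z)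
    (e := s(z', y)) (by simp [hzz', hy]) (G.mem_edgeSet.mpr (h ▸ hyy'.symm))
  have hzy' : z ≠ y' := fun h => hz (h ▸ hy')
  have hq : (cons hzz'.symm (cons hy (cons hyy' nil))).IsPath := by
    simp [cons_isPath_iff, hz'z, hyz'.symm, hy.ne, hy'z'.symm, hyy'.ne, hzy']
  exact hz (hG.support_subset_of_isPath hQ hq hz' hy' (by simp))

end IsAcyclic

theorem exists_isHamiltonianCycle_graphSquare_of_legs [DecidableEq V]
    (leg : V → List V) {l : List V} (d : V)
    (hl : l.IsChain G.Adj) (hnd : l.Nodup) (hlen : 3 ≤ l.length)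
    (hleg_nodup : ∀ y ∈ l, (leg y).Nodup) (hleg_adj : ∀ y ∈ l, ∀ w ∈ leg y, G.Adj y w)
    (hleg_off : ∀ y ∈ l, ∀ w ∈ leg y, w ∉ l)
    (hleg_disj : ∀ y ∈ l, ∀ y' ∈ l, ∀ w ∈ leg y, w ∈ leg y' → y = y')
    (hcover : ∀ w, w ∈ l ∨ ∃ y ∈ l.tail.dropLast, w ∈ leg y) :
    ∃ (a : V) (C : (GraphSquare G).Walk a a), C.IsHamiltonianCycle ∧
      s(l.getD 0 d, l.getD 1 d) ∈ C.edges ∧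
      s(l.getD (l.length - 2) d, l.getD (l.length - 1) d) ∈ C.edges ∧
      ∀ i, i + 2 < l.length →
        s(l.getD i d, (leg (l.getD (i + 1) d)).headD (l.getD (i + 2) d)) ∈ C.edges := by
  obtain ⟨a, b, t, rfl⟩ : ∃ a b t, l = a :: b :: t :=
    match l, hlen with | a :: b :: t, _ => ⟨a, b, t, rfl⟩
  obtain ⟨mid, hZ⟩ := exists_zigzag_eq leg a b t
  have hZnd := nodup_zigzag leg hnd hleg_nodup hleg_off hleg_disj
  have hZchain := isChain_graphSquare_adj (isChain_zigzag leg hl hleg_adj) hZnd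
  let W : (GraphSquare G).Walk a b :=
    (Walk.ofSupport _ (by simp [hZ]) hZchain).copy (by simp [hZ]) (by simp [hZ])
  have hW : W.support = zigzag leg (a :: b :: t) := by simp [W]
  have hWham : W.IsHamiltonian := ((Walk.isPath_def _).mpr (hW ▸ hZnd)).isHamiltonian_of_mem
    fun w => hW ▸ (mem_zigzag leg).mpr (hcover w)
  have hWlen : W.length ≠ 1 := by
    have := (hnd.subperm fun w hw => (mem_zigzag leg).mpr (Or.inl hw)).length_le
    rw [← hW, Walk.length_support] at this
    simp only [List.length_cons] at this hlen
    omega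
  have hba : (GraphSquare G).Adj b a := ⟨fun h => by simp [h] at hnd, Or.inl hl.rel.symm⟩
  have hedge {x y} (h : IsConsecutive (zigzag leg (a :: b :: t)) x y) :
      s(x, y) ∈ (Walk.cons hba W).edges :=
    List.mem_cons_of_mem _ (Walk.infix_support_iff_mem_edges.mp (hW ▸ h))
  exact ⟨b, .cons hba W, hWham.isHamiltonianCycle_cons hba hWlen, by simp [Sym2.eq_swap],
    hedge (isConsecutive_zigzag_getD_last leg d (by simp)),
    fun i hi => hedge (isConsecutive_zigzag_getD leg d hi)⟩

variable [Fintype V] [DecidableEq V] {T : SimpleGraph V} {u v : V} {P : T.Walk u v}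

lemma IsAcyclic.exists_isHamiltonianCycle_graphSquare_offSupportNeighbors (hT : T.IsAcyclic)
    (hP : P.IsPath) (hlen : 2 ≤ P.length)
    (hdom : ∀ w ∉ P.support, ∃ z ∈ P.support, T.Adj w z ∧ z ≠ u ∧ z ≠ v) :
    ∃ (a : V) (C : (GraphSquare T).Walk a a), C.IsHamiltonianCycle ∧
      s(P.support.getD 0 u, P.support.getD 1 u) ∈ C.edges ∧
      s(P.support.getD (P.support.length - 2) u,
        P.support.getD (P.support.length - 1) u) ∈ C.edges ∧
      ∀ i, i + 2 < P.support.length →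
        s(P.support.getD i u, (P.offSupportNeighbors (P.support.getD (i + 1) u)).headD
          (P.support.getD (i + 2) u)) ∈ C.edges :=
  exists_isHamiltonianCycle_graphSquare_of_legs _ u P.isChain_adj_support hP.support_nodup
    (by simp; omega) (fun _ _ => P.nodup_offSupportNeighbors _)
    (fun _ _ _ hw => (Walk.mem_offSupportNeighbors.1 hw).2)
    (fun _ _ _ hw => (Walk.mem_offSupportNeighbors.1 hw).1)
    (fun _ hy _ hy' _ hw hw' => hT.eq_of_adj_of_notMem_support hP hy hy'
      (Walk.mem_offSupportNeighbors.1 hw).1 (Walk.mem_offSupportNeighbors.1 hw).2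
      (Walk.mem_offSupportNeighbors.1 hw').2)
    (fun w => or_iff_not_imp_left.mpr fun hw =>
      let ⟨z, hz, hwz, hzu, hzv⟩ := hdom w hw
      ⟨z, Walk.mem_support_tail_dropLast hz hzu hzv, Walk.mem_offSupportNeighbors.2 ⟨hw, hwz.symm⟩⟩)

theorem IsAcyclic.exists_isHamiltonianCycle_graphSquare (hT : T.IsAcyclic) (hP : P.IsPath)
    (hlen : 2 ≤ P.length)
    (hdom : ∀ w ∉ P.support, ∃ z ∈ P.support, T.Adj w z ∧ z ≠ u ∧ z ≠ v) :
    ∃ (a : V) (C : (GraphSquare T).Walk a a), C.IsHamiltonianCycle ∧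
      s(P.support.getD 0 u, P.support.getD 1 u) ∈ C.edges ∧
      s(P.support.getD (P.support.length - 2) u,
        P.support.getD (P.support.length - 1) u) ∈ C.edges ∧
      ∃ e : ℕ → Sym2 V,
        (∀ j, 1 ≤ j → j ≤ P.support.length - 2 →
          e j ∈ C.edges ∧
          ∃ w₁ w₂, T.Adj (P.support.getD j u) w₁ ∧ T.Adj (P.support.getD j u) w₂ ∧
            e j = s(w₁, w₂)) ∧
        Set.InjOn e {j | 1 ≤ j ∧ j ≤ P.support.length - 2} ∧
        (∀ j, 1 ≤ j → j ≤ P.support.length - 2 →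
          e j ≠ s(P.support.getD 0 u, P.support.getD 1 u) ∧
          e j ≠ s(P.support.getD (P.support.length - 2) u,
                  P.support.getD (P.support.length - 1) u)) := by
  obtain ⟨a, C, hC, hfirst, hlast, hinner⟩ :=
    hT.exists_isHamiltonianCycle_graphSquare_offSupportNeighbors hP hlen hdom
  have hm : P.support.length = P.length + 1 := P.length_support
  let x (j : ℕ) : V := P.support.getD j u
  let e (j : ℕ) : Sym2 V := s(x (j - 1), (P.offSupportNeighbors (x j)).headD (x (j + 1)))
  have he_adj (j : ℕ) (hj1 : 1 ≤ j) (hj2 : j ≤ P.support.length - 2) :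
      ∀ w ∈ e j, T.Adj (x j) w := by
    intro w hw
    rcases Sym2.mem_iff.mp hw with rfl | rfl
    · simpa [x, Nat.sub_add_cancel hj1] using (P.adj_support_getD (i := j - 1) (by omega) u).symm
    · rcases h : P.offSupportNeighbors (x j) with _ | ⟨w, _⟩
      · simpa [h, x] using P.adj_support_getD (i := j) (by omega) u
      · have hw : w ∈ P.offSupportNeighbors (x j) := by rw [h]; exact List.mem_cons_self
        simpa [h] using (Walk.mem_offSupportNeighbors.1 hw).2
  have he_mem (j : ℕ) (hj1 : 1 ≤ j) (hj2 : j ≤ P.support.length - 2) : e j ∈ C.edges := by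
    obtain ⟨i, rfl⟩ : ∃ i, j = i + 1 := ⟨j - 1, by omega⟩
    simpa [e, x] using hinner i (by omega)
  have he_ne (j : ℕ) (hj1 : 1 ≤ j) (hj2 : j ≤ P.support.length - 2) {i : ℕ} (hi : i < P.length) :
      e j ≠ s(x i, x (i + 1)) := fun h =>
    hT.notMem_edgeSet_of_forall_mem_adj (he_adj j hj1 hj2) (h ▸ P.adj_support_getD hi u)
  refine ⟨a, C, hC, hfirst, hlast, e, fun j hj1 hj2 => ⟨he_mem j hj1 hj2, _, _,
    he_adj j hj1 hj2 _ (Sym2.mem_mk_left _ _), he_adj j hj1 hj2 _ (Sym2.mem_mk_right _ _), rfl⟩,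
    ?_, fun j hj1 hj2 => ⟨he_ne j hj1 hj2 (i := 0) (by omega), ?_⟩⟩
  · rintro j ⟨hj1, hj2⟩ j' ⟨hj1', hj2'⟩ hjj
    have := hT.eq_of_forall_mem_adj
      ((GraphSquare T).not_isDiag_of_mem_edgeSet (C.edges_subset_edgeSet (he_mem j hj1 hj2)))
      (he_adj j hj1 hj2) (hjj ▸ he_adj j' hj1' hj2')
    simp only [x, P.support_getD_eq_getVert (show j ≤ P.length by omega),
      P.support_getD_eq_getVert (show j' ≤ P.length by omega)] at this
    exact hP.getVert_injOn (by simp; omega) (by simp; omega) this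
  · have := he_ne j hj1 hj2 (i := P.length - 1) (by omega)
    rwa [show P.length - 1 + 1 = P.support.length - 1 by omega,
      show P.length - 1 = P.support.length - 2 by omega] at this

end SimpleGraph

section Caterpillar

open Walk

variable {T : SimpleGraph V}

lemma IsCaterpillar.false_of_subdivided_claw (hT : IsCaterpillar T) {x y₁ y₂ y₃ c₁ c₂ c₃ : V}
    (hy₁ : T.Adj x y₁) (hy₂ : T.Adj x y₂) (hy₃ : T.Adj x y₃)
    (h₁₂ : y₁ ≠ y₂) (h₁₃ : y₁ ≠ y₃) (h₂₃ : y₂ ≠ y₃)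
    (hc₁ : T.Adj y₁ c₁) (hc₂ : T.Adj y₂ c₂) (hc₃ : T.Adj y₃ c₃)
    (hc₁x : c₁ ≠ x) (hc₂x : c₂ ≠ x) (hc₃x : c₃ ≠ x) : False := by
  obtain ⟨hTree, _, _, Q, hQ, hdom⟩ := hT
  have onQ {z y y'} (h : T.Adj z y) (h' : T.Adj z y') (hne : y ≠ y') : z ∈ Q.support :=
    hTree.isAcyclic.mem_support_of_adj_of_adj hQ hdom h h' hne
  obtain ⟨a, b, hab⟩ := hTree.isAcyclic.exists_pair_of_adj_mem_support hQ (onQ hy₁ hy₂ h₁₂)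
  rcases hab y₁ (onQ hy₁.symm hc₁ hc₁x.symm) hy₁ with rfl | rfl <;>
  rcases hab y₂ (onQ hy₂.symm hc₂ hc₂x.symm) hy₂ with rfl | rfl <;>
  rcases hab y₃ (onQ hy₃.symm hc₃ hc₃x.symm) hy₃ with rfl | rfl <;>
  contradiction

variable {u v : V} {P : T.Walk u v}

lemma IsCaterpillar.branch_length_le_one (hT : IsCaterpillar T) (hP : P.IsPath)
    (hlongest : ∀ (a b : V) (Q : T.Walk a b), Q.IsPath → Q.length ≤ P.length)
    {w x : V} {W : T.Walk w x} (hW : W.IsPath) (hx : x ∈ P.support)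
    (hWP : ∀ y ∈ W.support, y ∈ P.support → y = x) : W.length ≤ 1 := by
  by_contra! hW2
  -- `W` and the two halves of `P` at `x` are three branches of length at least two at `x`.
  obtain ⟨i, rfl, hi⟩ := mem_support_iff_exists_getVert.mp hx
  have hdrop := hlongest _ _ _ (hW.append_of_forall_mem (hP.drop i) fun y hy hy' =>
    hWP y hy ((isSubwalk_drop P i).support_subset hy'))
  have htake := hlongest _ _ _ (hW.append_of_forall_mem (hP.take i).reverse fun y hy hy' =>
    hWP y hy ((isSubwalk_take P i).support_subset (by simpa using hy')))
  simp only [length_append, drop_length, length_reverse, take_length] at hdrop htake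
  obtain ⟨k, rfl⟩ : ∃ k, i = k + 2 := ⟨i - 2, by omega⟩
  have hk : k + 4 ≤ P.length := by omega
  set R := W.reverse
  have hR : R.IsPath := hW.reverse
  have hRlen : 2 ≤ R.length := by simp only [R, length_reverse]; omega
  have hR1 : R.getVert 1 ∉ P.support := fun h => one_ne_zero <|
    (hR.getVert_eq_start_iff (by omega)).mp (hWP _ (by simp [R]) h)
  have hPne {i j} (hij : i ≠ j) (hi : i ≤ P.length) (hj : j ≤ P.length) :
      P.getVert i ≠ P.getVert j :=
    hP.getVert_injOn.ne hi hj hij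
  exact hT.false_of_subdivided_claw (y₁ := R.getVert 1) (c₁ := R.getVert 2)
    (y₂ := P.getVert (k + 1)) (c₂ := P.getVert k)
    (y₃ := P.getVert (k + 3)) (c₃ := P.getVert (k + 4))
    (by simpa using R.adj_getVert_succ (i := 0) (by omega))
    (P.adj_getVert_succ (i := k + 1) (by omega)).symm (P.adj_getVert_succ (i := k + 2) (by omega))
    (fun h => hR1 (h ▸ P.getVert_mem_support _)) (fun h => hR1 (h ▸ P.getVert_mem_support _))
    (hPne (by omega) (by omega) (by omega))
    (R.adj_getVert_succ (i := 1) (by omega)) (P.adj_getVert_succ (i := k) (by omega)).symm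
    (P.adj_getVert_succ (i := k + 3) (by omega))
    ((hR.getVert_eq_start_iff (by omega)).not.mpr (by omega))
    (hPne (by omega) (by omega) (by omega)) (hPne (by omega) (by omega) (by omega))

lemma IsCaterpillar.exists_adj_of_notMem_support (hT : IsCaterpillar T) (hP : P.IsPath)
    (hlongest : ∀ (a b : V) (Q : T.Walk a b), Q.IsPath → Q.length ≤ P.length)
    {w : V} (hw : w ∉ P.support) : ∃ z ∈ P.support, T.Adj w z ∧ z ≠ u ∧ z ≠ v := by
  obtain ⟨z, hz, W, hW, hWP⟩ := ((hT.1.connected.preconnected w u).some).exists_isPath_first_mem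
    {y | y ∈ P.support} P.start_mem_support
  have hlen := hT.branch_length_le_one hP hlongest hW hz hWP
  have hW0 : W.length ≠ 0 := fun h => hw (eq_of_length_eq_zero h ▸ hz)
  have hwz : T.Adj w z := W.adj_of_length_eq_one (by omega)
  refine ⟨z, hz, hwz, ?_, ?_⟩
  · rintro rfl
    simpa using hlongest _ _ (cons hwz P) (hP.cons hw)
  · rintro rfl
    simpa using hlongest _ _ (cons hwz P.reverse) (hP.reverse.cons (by simpa using hw))

lemma IsCaterpillar.two_le_length [Fintype V] (hT : IsCaterpillar T) (hV : 3 ≤ Fintype.card V)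
    (hP : P.IsPath) (hlongest : ∀ (a b : V) (Q : T.Walk a b), Q.IsPath → Q.length ≤ P.length) :
    2 ≤ P.length := by
  classical
  by_cases hall : ∀ w, w ∈ P.support
  · have hcard : (Finset.univ : Finset V).card ≤ P.support.toFinset.card :=
      Finset.card_le_card fun w _ => List.mem_toFinset.mpr (hall w)
    have := P.support.toFinset_card_le
    simp only [Finset.card_univ, length_support] at hcard this
    omega
  obtain ⟨w, hw⟩ := not_forall.mp hall
  obtain ⟨z, hz, -, hzu, hzv⟩ := hT.exists_adj_of_notMem_support hP hlongest hw
  obtain ⟨i, rfl, hi⟩ := mem_support_iff_exists_getVert.mp hz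
  have : i ≠ 0 := by rintro rfl; simp at hzu
  have : i ≠ P.length := by rintro rfl; simp at hzv
  omega

end Caterpillar

/-- **Observation.** Let `T` be a caterpillar with at least three vertices and let
`P = x₁x₂…x_m` be a longest path in `T`. Then `T²` has a hamiltonian cycle containing the
edges `x₁x₂` and `x_{m-1}x_m` and, for each `j = 2, …, m-1`, a further edge `u_j v_j` with
`u_j, v_j` neighbors of `x_j` in `T`, all these edges being pairwise distinct.
(Here the vertices of `P` are indexed from `0`, so `x_j = P.support.getD (j-1) u`.) -/
theorem caterpillar_square_hamiltonian_cycle [Fintype V] [DecidableEq V]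
    (T : SimpleGraph V) (hT : IsCaterpillar T) (hV : 3 ≤ Fintype.card V)
    {u v : V} (P : T.Walk u v) (hP : P.IsPath)
    (hlongest : ∀ (a b : V) (Q : T.Walk a b), Q.IsPath → Q.length ≤ P.length) :
    ∃ (a : V) (C : (GraphSquare T).Walk a a), C.IsHamiltonianCycle ∧
      s(P.support.getD 0 u, P.support.getD 1 u) ∈ C.edges ∧
      s(P.support.getD (P.support.length - 2) u,
        P.support.getD (P.support.length - 1) u) ∈ C.edges ∧
      ∃ e : ℕ → Sym2 V,
        (∀ j, 1 ≤ j → j ≤ P.support.length - 2 →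
          e j ∈ C.edges ∧
          ∃ w₁ w₂, T.Adj (P.support.getD j u) w₁ ∧ T.Adj (P.support.getD j u) w₂ ∧
            e j = s(w₁, w₂)) ∧
        Set.InjOn e {j | 1 ≤ j ∧ j ≤ P.support.length - 2} ∧
        (∀ j, 1 ≤ j → j ≤ P.support.length - 2 →
          e j ≠ s(P.support.getD 0 u, P.support.getD 1 u) ∧
          e j ≠ s(P.support.getD (P.support.length - 2) u,
                  P.support.getD (P.support.length - 1) u)) :=
  hT.1.isAcyclic.exists_isHamiltonianCycle_graphSquare hP (hT.two_le_length hV hP hlongest)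
    fun _ hw => hT.exists_adj_of_notMem_support hP hlongest hw
end

section
/- Let k ≥ 5 and let G be a connected graph containing the complete bipartite graph K_{2,k} as a block, such that each of the k vertices of degree 2 in this K_{2,k} is a cutvertex of G incident with an edge of G outside the block. Then the square G² is not hamiltonian. -/
/-!
For each spoke `c_j` of the `K_{2,k}`, let `S_j` be the set of vertices that `c_j` separates
from a hub. These sets are nonempty and pairwise disjoint, and maximality of the block forces
every neighbour of `c_j` outside the block into `S_j`; so in `G²` the only vertices outside
`S_j ∪ {c_j}` adjacent to `S_j` are the two hubs. A hamiltonian cycle of `G²` stays connected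
after deleting `c_j`, hence has an edge from each `S_j` to a hub. The two hubs carry only four
cycle edges, so `k ≤ 4`.
-/

open SimpleGraph Function

variable {V : Type*}

namespace SimpleGraph.Walk

variable {G : SimpleGraph V} {u : V}

lemma toSubgraph_adj_of_mem_darts {x y : V} {p : G.Walk x y} {d : G.Dart} (hd : d ∈ p.darts) :
    p.toSubgraph.Adj d.fst d.snd := by
  rw [← Subgraph.mem_edgeSet, mem_edges_toSubgraph]
  exact List.mem_map_of_mem hd

lemma IsCycle.dart_eq_of_fst_eq {c : G.Walk u u} (hc : c.IsCycle) {d d' : G.Dart}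
    (hd : d ∈ c.darts) (hd' : d' ∈ c.darts) (h : d.fst = d'.fst) : d = d' :=
  List.inj_on_of_nodup_map (by rw [map_fst_darts]; exact hc.nodup_dropLast_support) hd hd' h

lemma exists_mem_darts_fst_notMem_snd_mem {c : G.Walk u u} {S : Set V} {x s : V}
    (hx : x ∈ c.support) (hxS : x ∉ S) (hs : s ∈ c.support) (hsS : s ∈ S) :
    ∃ d ∈ c.darts, d.fst ∉ S ∧ d.snd ∈ S := by
  classical
  set r := c.rotate x hx
  have hs' : s ∈ r.support := (c.mem_support_rotate_iff x hx).mpr hs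
  obtain ⟨d, hd, hdS, hdS'⟩ := (r.takeUntil s hs').exists_boundary_dart Sᶜ hxS (by simpa using hsS)
  exact ⟨d, (c.rotate_darts x hx).mem_iff.mp (r.darts_takeUntil_subset_darts hs' hd), hdS,
    by simpa using hdS'⟩

/-- A cycle stays connected after deleting one vertex `v`. -/
lemma IsCycle.exists_toSubgraph_adj_of_notMem {c : G.Walk u u} (hc : c.IsCycle) {S : Set V}
    {v x s : V} (hx : x ∈ c.support) (hxS : x ∉ S) (hxv : x ≠ v)
    (hs : s ∈ c.support) (hsS : s ∈ S) :
    ∃ y ∈ S, ∃ w ∉ S, w ≠ v ∧ c.toSubgraph.Adj y w := by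
  obtain ⟨d, hd, hdS, hdS'⟩ := exists_mem_darts_fst_notMem_snd_mem hx hxS hs hsS
  by_cases hdv : d.fst = v
  · obtain ⟨d', hd', hd'S, hd'S'⟩ := exists_mem_darts_fst_notMem_snd_mem (S := (insert v S)ᶜ)
      hs (by simp [hsS]) hx (by simp [hxv, hxS])
    simp only [Set.mem_compl_iff, Set.mem_insert_iff, not_or, not_and_or, not_not] at hd'S hd'S'
    rcases hd'S with h | h
    · have := hc.dart_eq_of_fst_eq hd' hd (h.trans hdv.symm)
      exact absurd (this ▸ hdS') hd'S'.2
    · exact ⟨d'.fst, h, d'.snd, hd'S'.2, hd'S'.1, toSubgraph_adj_of_mem_darts hd'⟩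
  · exact ⟨d.snd, hdS', d.fst, hdS, hdv, (toSubgraph_adj_of_mem_darts hd).symm⟩

/-- Each `S i` is left by a cycle edge avoiding `v i`, which must end in `A`, and a vertex of
`A` has only two neighbours on the cycle. -/
theorem IsHamiltonianCycle.card_le_two_mul_card [DecidableEq V] {ι : Type*} [Fintype ι]
    {c : G.Walk u u} (hc : c.IsHamiltonianCycle) (A : Finset V) (S : ι → Set V) (v : ι → V)
    (hdisj : Pairwise (Disjoint on S)) (hS : ∀ i, (S i).Nonempty)
    (hout : ∀ i, ∃ x ∉ S i, x ≠ v i)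
    (hA : ∀ i y w, y ∈ S i → G.Adj y w → w ∉ S i → w ≠ v i → w ∈ A) :
    Fintype.card ι ≤ 2 * A.card := by
  have hy : ∀ i, ∃ y ∈ S i, y ∈ ⋃ a ∈ A, c.toSubgraph.neighborSet a := by
    intro i
    obtain ⟨s, hs⟩ := hS i
    obtain ⟨x, hxS, hxv⟩ := hout i
    obtain ⟨y, hy, w, hwS, hwv, hyw⟩ := hc.isCycle.exists_toSubgraph_adj_of_notMem
      (hc.mem_support x) hxS hxv (hc.mem_support s) hs
    exact ⟨y, hy, Set.mem_biUnion (hA i y w hy hyw.adj_sub hwS hwv) hyw.symm⟩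
  choose y hyS hyA using hy
  have hinj : Injective y := fun i j hij ↦
    hdisj.eq (Set.not_disjoint_iff.mpr ⟨y i, hyS i, hij ▸ hyS j⟩)
  have hN : ∀ a ∈ A, (c.toSubgraph.neighborSet a).ncard = 2 := fun a _ ↦
    hc.isCycle.ncard_neighborSet_toSubgraph_eq_two (hc.mem_support a)
  calc Fintype.card ι = (Set.range y).ncard := by
        rw [Set.ncard_range_of_injective hinj, Nat.card_eq_fintype_card]
    _ ≤ (⋃ a ∈ A, c.toSubgraph.neighborSet a).ncard :=
        Set.ncard_le_ncard (Set.range_subset_iff.mpr hyA)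
          (A.finite_toSet.biUnion fun a ha ↦ Set.finite_of_ncard_ne_zero (by simp [hN a ha]))
    _ ≤ ∑ a ∈ A, (c.toSubgraph.neighborSet a).ncard := A.set_ncard_biUnion_le _
    _ = 2 * A.card := by rw [Finset.sum_congr rfl hN, Finset.sum_const, smul_eq_mul, mul_comm]

end SimpleGraph.Walk

namespace SimpleGraph

variable {G : SimpleGraph V}

def induceDiffSingletonIso (G : SimpleGraph V) (s : Set V) (v : s) :
    (G.induce s).induce {u | u ≠ v} ≃g G.induce (s \ {(v : V)}) where
  toFun u := ⟨u.1.1, u.1.2, fun h ↦ u.2 (Subtype.ext h)⟩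
  invFun x := ⟨⟨x.1, x.2.1⟩, fun h ↦ x.2.2 (congrArg Subtype.val h)⟩
  left_inv _ := rfl
  right_inv _ := rfl
  map_rel_iff' := Iff.rfl

lemma not_isCutVertex_induce_iff {s : Set V} (hs : (G.induce s).Connected) (v : s) :
    ¬ IsCutVertex (G.induce s) v ↔ (G.induce (s \ {(v : V)})).Preconnected := by
  set e := induceDiffSingletonIso G s v
  rw [IsCutVertex, e.connected_iff]
  constructor
  · intro h x y
    by_contra hxy
    exact h ⟨hs, ⟨(e.symm x).1, (e.symm x).2⟩, fun hc ↦ hxy (hc.preconnected x y)⟩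
  · rintro h ⟨-, ⟨x, hx⟩, hn⟩
    exact hn ((connected_iff _).mpr ⟨h, ⟨e ⟨x, hx⟩⟩⟩)

lemma IsBlock.preconnected_induce_diff_singleton {B : Set V} (hB : IsBlock G B) (z : V) :
    (G.induce (B \ {z})).Preconnected := by
  by_cases hz : z ∈ B
  · exact (not_isCutVertex_induce_iff hB.1 ⟨z, hz⟩).mp (hB.2.1 _)
  · rw [Set.sdiff_singleton_eq_self hz]
    exact hB.1.preconnected

lemma IsBlock.eq_of_subset {B C : Set V} (hB : IsBlock G B) (hBC : B ⊆ C)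
    (hC : (G.induce C).Connected) (hCz : ∀ z, (G.induce (C \ {z})).Preconnected) : C = B :=
  hB.2.2 C hBC hC fun v ↦ (not_isCutVertex_induce_iff hC v).mpr (hCz v)

lemma Walk.IsPath.exists_walk_to_end_avoiding {x y u z : V} {p : G.Walk x y} (hp : p.IsPath)
    (hu : u ∈ p.support) (huz : u ≠ z) :
    ∃ e, (e = x ∨ e = y) ∧ ∃ q : G.Walk u e, (∀ w ∈ q.support, w ∈ p.support) ∧ z ∉ q.support := by
  obtain ⟨q, r, rfl⟩ := Walk.mem_support_iff_exists_append.mp hu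
  by_cases hzq : z ∈ q.support
  · refine ⟨y, .inr rfl, r, fun w hw ↦ (Walk.mem_support_append_iff _ _).mpr (.inr hw), fun hzr ↦ ?_⟩
    have hnodup := hp.support_nodup
    rw [Walk.support_append] at hnodup
    rw [← Walk.cons_tail_support, List.mem_cons] at hzr
    exact hzr.elim (fun h ↦ huz h.symm) (List.disjoint_of_nodup_append hnodup hzq)
  · refine ⟨x, .inl rfl, q.reverse, fun w hw ↦ (Walk.mem_support_append_iff _ _).mpr (.inl ?_), ?_⟩
    · simpa using hw
    · simpa using hzq

/-- An ear attached to a block at two of its vertices would enlarge the block. -/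
lemma IsBlock.support_subset_of_isPath {B : Set V} (hB : IsBlock G B) {x y : V}
    {p : G.Walk x y} (hp : p.IsPath) (hx : x ∈ B) (hy : y ∈ B) : {v | v ∈ p.support} ⊆ B := by
  set C := B ∪ {v | v ∈ p.support}
  suffices C = B from this ▸ Set.subset_union_right
  refine hB.eq_of_subset Set.subset_union_left
    (induce_union_connected hB.1.preconnected p.connected_induce_support.preconnected
      ⟨x, hx, p.start_mem_support⟩) fun z ↦ ?_
  have hBC : B \ {z} ⊆ C \ {z} := Set.sdiff_subset_sdiff_left Set.subset_union_left
  have reach : ∀ u (hu : u ∈ C \ {z}), ∃ e, ∃ he : e ∈ B \ {z},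
      (G.induce (C \ {z})).Reachable ⟨u, hu⟩ ⟨e, hBC he⟩ := by
    rintro u ⟨huB | huE, huz⟩
    · exact ⟨u, ⟨huB, huz⟩, .rfl⟩
    · obtain ⟨e, hxy, q, hqp, hzq⟩ := hp.exists_walk_to_end_avoiding huE huz
      have hq : ∀ w ∈ q.support, w ∈ C \ {z} := fun w hw ↦
        ⟨.inr (hqp w hw), fun h ↦ hzq (h ▸ hw)⟩
      exact ⟨e, ⟨hxy.elim (· ▸ hx) (· ▸ hy), (hq e q.end_mem_support).2⟩,
        (q.induce _ hq).reachable⟩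
  rintro ⟨u₁, hu₁⟩ ⟨u₂, hu₂⟩
  obtain ⟨e₁, he₁, h₁⟩ := reach u₁ hu₁
  obtain ⟨e₂, he₂, h₂⟩ := reach u₂ hu₂
  exact h₁.trans (((hB.preconnected_induce_diff_singleton z ⟨e₁, he₁⟩ ⟨e₂, he₂⟩).map
    (G.induceHomOfLE hBC).toHom).trans h₂.symm)

def cutOff (G : SimpleGraph V) (c a : V) : Set V :=
  {v | v ≠ c ∧ ∀ p : G.Walk v a, c ∈ p.support}

variable {a c c' u v x : V}

lemma notMem_cutOff_of_walk (p : G.Walk v a) (hp : c ∉ p.support) : v ∉ G.cutOff c a :=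
  fun h ↦ hp (h.2 p)

lemma notMem_cutOff_iff : v ∉ G.cutOff c a ↔ v = c ∨ ∃ p : G.Walk v a, c ∉ p.support := by
  simp only [cutOff, Set.mem_ofPred_eq, not_and_or, not_not, not_forall]

lemma mem_cutOff_of_adj (hu : u ∈ G.cutOff c a) (h : G.Adj u x) (hx : x ≠ c) :
    x ∈ G.cutOff c a :=
  ⟨hx, fun p ↦ by simpa [Ne.symm hu.1] using hu.2 (p.cons h)⟩

lemma IsCutVertex.cutOff_nonempty (hc : IsCutVertex G c) (ha : a ≠ c) :
    (G.cutOff c a).Nonempty := by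
  obtain ⟨-, ⟨w, hw⟩, hnc⟩ := hc
  by_contra! h
  have reach : ∀ x : {u | u ≠ c}, (G.induce {u | u ≠ c}).Reachable x ⟨a, ha⟩ := by
    intro x
    obtain ⟨p, hp⟩ := (notMem_cutOff_iff.mp (h ▸ Set.notMem_empty x.1)).resolve_left x.2
    exact (p.induce {u | u ≠ c} fun z hz hzc ↦ hp (hzc ▸ hz)).reachable
  exact hnc ((connected_iff _).mpr ⟨fun x y ↦ (reach x).trans (reach y).symm, ⟨⟨w, hw⟩⟩⟩)

lemma disjoint_cutOff (hG : G.Preconnected) (hcc : c ≠ c') (hc : c ∉ G.cutOff c' a)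
    (hc' : c' ∉ G.cutOff c a) : Disjoint (G.cutOff c a) (G.cutOff c' a) := by
  rw [Set.disjoint_left]
  intro v hv hv'
  obtain ⟨p⟩ := hG v a
  induction p with
  | nil => exact hv.1 (by simpa using hv.2 .nil : c = _).symm
  | @cons v w _ h p ih =>
    by_cases hw : w = c
    · exact hc (hw ▸ mem_cutOff_of_adj hv' h (hw ▸ hcc))
    by_cases hw' : w = c'
    · exact hc' (hw' ▸ mem_cutOff_of_adj hv h (hw' ▸ hcc.symm))
    exact ih hc hc' (mem_cutOff_of_adj hv h hw) (mem_cutOff_of_adj hv' h hw')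

lemma IsBlock.mem_or_mem_cutOff_of_adj {B : Set V} (hB : IsBlock G B) (hc : c ∈ B) (ha : a ∈ B)
    (h : G.Adj c x) : x ∈ B ∨ x ∈ G.cutOff c a := by
  classical
  by_contra! hx
  obtain ⟨hxB, hxS⟩ := hx
  obtain ⟨p, hp⟩ := (notMem_cutOff_iff.mp hxS).resolve_left h.ne.symm
  have hpath : (p.bypass.cons h).IsPath :=
    p.bypass_isPath.cons fun hc' ↦ hp (p.support_bypass_subset_support hc')
  exact hxB (hB.support_subset_of_isPath hpath hc ha
    (List.mem_cons_of_mem _ p.bypass.start_mem_support))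

lemma IsBlock.mem_and_adj_of_graphSquare_adj {B : Set V} {w : V} (hB : IsBlock G B) (hc : c ∈ B)
    (ha : a ∈ B) (hu : u ∈ G.cutOff c a) (huw : (GraphSquare G).Adj u w)
    (hw : w ∉ G.cutOff c a) (hwc : w ≠ c) : w ∈ B ∧ G.Adj c w := by
  obtain ⟨-, h | ⟨m, hum, hmw⟩⟩ := huw
  · exact absurd (mem_cutOff_of_adj hu h hwc) hw
  by_cases hm : m = c
  · subst hm
    exact ⟨(hB.mem_or_mem_cutOff_of_adj hc ha hmw).resolve_right hw, hmw⟩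
  · exact absurd (mem_cutOff_of_adj (mem_cutOff_of_adj hu hum hm) hmw hwc) hw

variable {B : Set V} {α β : Type*}

lemma Iso.adj_symm_inl_symm_inr (φ : G.induce B ≃g completeBipartiteGraph α β) (i : α) (j : β) :
    G.Adj (φ.symm (.inl i) : V) (φ.symm (.inr j)) :=
  φ.symm.map_rel_iff.mpr (by simp)

lemma Iso.exists_eq_symm_inl_of_adj (φ : G.induce B ≃g completeBipartiteGraph α β) {j : β}
    {w : V} (hw : w ∈ B) (h : G.Adj (φ.symm (.inr j) : V) w) : ∃ i, w = φ.symm (.inl i) := by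
  have h' : (completeBipartiteGraph α β).Adj (.inr j) (φ ⟨w, hw⟩) := by
    simpa using φ.map_rel_iff.mpr (show (G.induce B).Adj (φ.symm (.inr j)) ⟨w, hw⟩ from h)
  obtain ⟨i, hi⟩ : ∃ i, φ ⟨w, hw⟩ = .inl i := by
    rcases hφ : φ ⟨w, hw⟩ with i | i
    · exact ⟨i, rfl⟩
    · simp [hφ] at h'
  exact ⟨i, congrArg Subtype.val (φ.symm_apply_eq.mpr hi.symm).symm⟩

lemma Iso.symm_inr_notMem_cutOff (φ : G.induce B ≃g completeBipartiteGraph α β) {i j : β}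
    (hij : i ≠ j) (i₀ : α) :
    (φ.symm (.inr i) : V) ∉ G.cutOff (φ.symm (.inr j)) (φ.symm (.inl i₀)) :=
  notMem_cutOff_of_walk (φ.adj_symm_inl_symm_inr i₀ i).symm.toWalk
    (by simp [Subtype.coe_inj, Ne.symm hij])

end SimpleGraph

theorem square_not_hamiltonian_of_K2k_block_general
    (G : SimpleGraph V) (hG : G.Connected)
    (k : ℕ) (hk : 5 ≤ k) (B : Set V) (hB : IsBlock G B)
    (φ : G.induce B ≃g completeBipartiteGraph (Fin 2) (Fin k))
    (hcut : ∀ j : Fin k,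
      IsCutVertex G ((φ.symm (Sum.inr j) : B) : V) ∧
      ∃ w : V, w ∉ B ∧ G.Adj ((φ.symm (Sum.inr j) : B) : V) w) :
    ¬ HasHamiltonianCycle (GraphSquare G) := by
  classical
  rintro ⟨u, c, hc⟩
  set hub : Fin 2 → V := fun i ↦ φ.symm (.inl i)
  set spoke : Fin k → V := fun j ↦ φ.symm (.inr j)
  have hub_ne_spoke (j : Fin k) : hub 0 ≠ spoke j := by simp [hub, spoke, Subtype.coe_inj]
  have hcard := hc.card_le_two_mul_card (Finset.univ.image hub)
    (fun j ↦ G.cutOff (spoke j) (hub 0)) spoke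
    (fun i j hij ↦ disjoint_cutOff hG.preconnected (by simpa [spoke, Subtype.coe_inj] using hij)
      (φ.symm_inr_notMem_cutOff hij 0) (φ.symm_inr_notMem_cutOff hij.symm 0))
    (fun j ↦ (hcut j).1.cutOff_nonempty (hub_ne_spoke j))
    (fun j ↦ ⟨hub 0, notMem_cutOff_of_walk .nil (by simpa using (hub_ne_spoke j).symm),
      hub_ne_spoke j⟩)
    (fun j y w hy hyw hw hwj ↦ by
      obtain ⟨hwB, hadj⟩ := hB.mem_and_adj_of_graphSquare_adj (φ.symm (.inr j)).2
        (φ.symm (.inl 0)).2 hy hyw hw hwj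
      obtain ⟨i, rfl⟩ := φ.exists_eq_symm_inl_of_adj hwB hadj
      exact Finset.mem_image_of_mem hub (Finset.mem_univ i))
  have hhub : (Finset.univ.image hub).card ≤ 2 := Finset.card_image_le.trans (by simp)
  simp only [Fintype.card_fin] at hcard
  omega

/-- Let `k ≥ 5` and let `G` be a connected graph containing `K_{2,k}` as a block such that
each of the `k` vertices of degree 2 of this `K_{2,k}` is a cutvertex of `G` incident with
an edge of `G` outside the block. Then `G²` is not hamiltonian. -/
theorem square_not_hamiltonian_of_K2k_block [Fintype V]
    (G : SimpleGraph V) (hG : G.Connected)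
    (k : ℕ) (hk : 5 ≤ k) (B : Set V) (hB : IsBlock G B)
    (φ : G.induce B ≃g completeBipartiteGraph (Fin 2) (Fin k))
    (hcut : ∀ j : Fin k,
      IsCutVertex G ((φ.symm (Sum.inr j) : B) : V) ∧
      ∃ w : V, w ∉ B ∧ G.Adj ((φ.symm (Sum.inr j) : B) : V) w) :
    ¬ HasHamiltonianCycle (GraphSquare G) :=
  square_not_hamiltonian_of_K2k_block_general G hG k hk B hB φ hcut
end

section
/- Let r ≥ 3 and let G be a connected graph containing a cycle C_r as a block such that all r vertices of this cycle are cutvertices of G. Then for any two distinct vertices x, y of this cycle there is no hamiltonian path from x to y in the square G²; in particular G² is not hamiltonian connected. -/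
open SimpleGraph Function

variable {V : Type*}

/-!
For `v ∈ B` let `P v` be the union of the components of `G - v` that avoid `B`. As `v` is a
cutvertex, `P v` is nonempty, and distinct `v` give disjoint `P v`. An edge `zw` of `G²` with
`w ∈ P v` and `z ∉ P v` has `z ∈ B`: either `z = v`, or `z` is a neighbour of `v` outside `P v`,
and then `v z … b` is a path between two vertices of the block `B`, which maximality of the block
forces to lie inside `B`. So a hamiltonian path of `G²` from `x ∈ B` to `y ∈ B` enters each of the
`r` sets `P v` right after some vertex of `B`; these `r` vertices are distinct and none is `y`,
which is impossible.
-/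

namespace SimpleGraph.Walk.IsPath

variable {G : SimpleGraph V} {u v : V} {p : G.Walk u v}

lemma eq_of_mem_takeUntil_of_mem_dropUntil [DecidableEq V] (hp : p.IsPath) {m x : V}
    (hm : m ∈ p.support) (hx₁ : x ∈ (p.takeUntil m hm).support)
    (hx₂ : x ∈ (p.dropUntil m hm).support) : x = m := by
  have hnd := hp.support_nodup
  rw [← p.take_spec hm, support_append, List.nodup_append] at hnd
  rw [← cons_tail_support, List.mem_cons] at hx₂
  exact hx₂.resolve_right fun h => hnd.2.2 _ hx₁ _ h rfl

lemma injOn_dart_fst (hp : p.IsPath) : Set.InjOn (fun d : G.Dart => d.fst) {d | d ∈ p.darts} := by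
  have hnd := hp.support_nodup
  rw [← p.map_fst_darts_append] at hnd
  exact fun d hd d' hd' => List.inj_on_of_nodup_map (List.nodup_append.1 hnd).1 hd hd'

lemma dart_fst_ne_end (hp : p.IsPath) {d : G.Dart} (hd : d ∈ p.darts) : d.fst ≠ v := by
  have hnd := hp.support_nodup
  rw [← p.map_fst_darts_append, List.nodup_append] at hnd
  exact hnd.2.2 _ (List.mem_map_of_mem hd) _ (List.mem_singleton_self v)

/-- Each pocket met by the path is entered from a vertex of `B`; these entry vertices are distinct
and differ from `y`, so there are too few of them to serve every `v ∈ B`. -/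
theorem exists_forall_notMem_support {B : Set V} (hB : B.Finite) {S : V → Set V}
    (hS : B.PairwiseDisjoint S) (hentry : ∀ v ∈ B, ∀ w ∈ S v, ∀ z, G.Adj z w → z ∉ S v → z ∈ B)
    {x y : V} (hx : ∀ v ∈ B, x ∉ S v) (hy : y ∈ B) {p : G.Walk x y} (hp : p.IsPath) :
    ∃ v ∈ B, ∀ w ∈ S v, w ∉ p.support := by
  classical
  by_contra! hmeet
  have hentryDart : ∀ v ∈ B, ∃ d ∈ p.darts, d.fst ∈ B ∧ d.snd ∈ S v := by
    intro v hv
    obtain ⟨w, hw, hwp⟩ := hmeet v hv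
    obtain ⟨d, hd, hfst, hsnd⟩ :=
      (p.takeUntil w hwp).exists_boundary_dart (S v)ᶜ (hx v hv) (not_not.2 hw)
    rw [Set.mem_compl_iff, not_not] at hsnd
    exact ⟨d, p.darts_takeUntil_subset_darts hwp hd,
      hentry v hv d.snd hsnd d.fst d.adj hfst, hsnd⟩
  have : Nonempty G.Dart := (hentryDart y hy).nonempty
  choose! d hd hdB hdS using hentryDart
  have hmaps : ∀ v ∈ B, (d v).fst ∈ B \ {y} :=
    fun v hv => ⟨hdB v hv, hp.dart_fst_ne_end (hd v hv)⟩
  have hinj : Set.InjOn (fun v => (d v).fst) B := by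
    intro u hu v hv huv
    have hduv : d u = d v := hp.injOn_dart_fst (hd u hu) (hd v hv) huv
    exact hS.elim_set hu hv (d u).snd (hdS u hu) (hduv ▸ hdS v hv)
  have hcard := Set.ncard_le_ncard_of_injOn _ hmaps hinj hB.sdiff
  exact hcard.not_gt (Set.ncard_sdiff_singleton_lt_of_mem hy hB)

end SimpleGraph.Walk.IsPath

section Blocks

variable {G : SimpleGraph V} {B : Set V}

lemma connected_induce_of_forall_exists_walk {s t : Set V} (hst : s ⊆ t)
    (hs : (G.induce s).Connected)
    (ht : ∀ x ∈ t, ∃ y ∈ s, ∃ p : G.Walk x y, ∀ z ∈ p.support, z ∈ t) :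
    (G.induce t).Connected := by
  obtain ⟨⟨u, hu⟩⟩ := hs.nonempty
  refine G.induce_connected_of_patches u (hst hu) fun {x} hx => ?_
  obtain ⟨y, hy, p, hp⟩ := ht x hx
  exact ⟨s ∪ {z | z ∈ p.support}, Set.union_subset hst hp, Or.inl hu, Or.inr p.start_mem_support,
    (induce_union_connected hs.preconnected p.connected_induce_support.preconnected
      ⟨y, hy, p.end_mem_support⟩).preconnected _ _⟩

/-- Whatever survives of the path after deleting `c` hangs on `S \ {c}` at one of the path's
ends. -/
lemma connected_induce_union_support_sdiff [DecidableEq V] {S : Set V}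
    (hS : ∀ c, (G.induce (S \ {c})).Connected) {a b : V} {P : G.Walk a b} (hP : P.IsPath)
    (ha : a ∈ S) (hb : b ∈ S) (c : V) :
    (G.induce ((S ∪ {x | x ∈ P.support}) \ {c})).Connected := by
  refine connected_induce_of_forall_exists_walk
    (Set.sdiff_subset_sdiff_left Set.subset_union_left) (hS c) ?_
  rintro m ⟨hmS | hmP, hmc⟩
  · refine ⟨m, ⟨hmS, hmc⟩, Walk.nil, fun z hz => ?_⟩
    rw [Walk.support_nil, List.mem_singleton] at hz
    exact hz ▸ ⟨Or.inl hmS, hmc⟩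
  by_cases hc : c ∈ (P.takeUntil m hmP).support
  · have hc' : c ∉ (P.dropUntil m hmP).support := fun h =>
      hmc (hP.eq_of_mem_takeUntil_of_mem_dropUntil hmP hc h).symm
    refine ⟨b, ⟨hb, fun h => hc' (h ▸ Walk.end_mem_support _)⟩, P.dropUntil m hmP,
      fun z hz => ⟨Or.inr (P.support_dropUntil_subset_support hmP hz), fun h => hc' (h ▸ hz)⟩⟩
  · refine ⟨a, ⟨ha, fun h => hc (h ▸ Walk.start_mem_support _)⟩, (P.takeUntil m hmP).reverse,
      fun z hz => ?_⟩
    rw [Walk.support_reverse, List.mem_reverse] at hz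
    exact ⟨Or.inr (P.support_takeUntil_subset_support hmP hz), fun h => hc (h ▸ hz)⟩

def induceNeIso (G : SimpleGraph V) {S : Set V} (c : S) :
    (G.induce S).induce {u | u ≠ c} ≃g G.induce (S \ {c.1}) where
  toFun u := ⟨u.1.1, u.1.2, fun h => u.2 (Subtype.ext h)⟩
  invFun x := ⟨⟨x.1, x.2.1⟩, fun h => x.2.2 (congrArg Subtype.val h)⟩
  left_inv _ := rfl
  right_inv _ := rfl
  map_rel_iff' := Iff.rfl

lemma isCutVertex_induce_iff {S : Set V} {c : S} :
    IsCutVertex (G.induce S) c ↔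
      (G.induce S).Connected ∧ (S \ {c.1}).Nonempty ∧ ¬ (G.induce (S \ {c.1})).Connected := by
  rw [IsCutVertex, (induceNeIso G c).connected_iff, ← Set.nonempty_coe_sort,
    ← Set.nonempty_coe_sort, (induceNeIso G c).toEquiv.nonempty_congr]

lemma IsBlock.connected_induce_sdiff (hB : IsBlock G B) (hBn : B.Nontrivial) (c : V) :
    (G.induce (B \ {c})).Connected := by
  by_cases hc : c ∈ B
  · have hcut := hB.2.1 ⟨c, hc⟩
    rw [isCutVertex_induce_iff] at hcut
    push Not at hcut
    obtain ⟨b, hb, hbc⟩ := hBn.exists_ne c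
    exact hcut hB.1 ⟨b, hb, hbc⟩
  · rw [Set.sdiff_singleton_eq_self hc]
    exact hB.1

lemma IsBlock.eq_of_superset (hB : IsBlock G B) {C : Set V} (hBC : B ⊆ C)
    (hC : (G.induce C).Connected) (hCc : ∀ c, (G.induce (C \ {c})).Connected) : C = B :=
  hB.2.2 C hBC hC fun c hc => (isCutVertex_induce_iff.1 hc).2.2 (hCc c)

theorem IsBlock.support_subset_of_isPath (hB : IsBlock G B) (hBn : B.Nontrivial) {a b : V}
    {P : G.Walk a b} (hP : P.IsPath) (ha : a ∈ B) (hb : b ∈ B) : ∀ x ∈ P.support, x ∈ B := by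
  classical
  have hC := hB.eq_of_superset Set.subset_union_left
    (induce_union_connected hB.1.preconnected P.connected_induce_support.preconnected
      ⟨a, ha, P.start_mem_support⟩)
    (connected_induce_union_support_sdiff (hB.connected_induce_sdiff hBn) hP ha hb)
  exact fun x hx => hC.subset (Or.inr hx)

end Blocks

section Pendant

variable {G : SimpleGraph V} {B : Set V} {u v w z : V}

/-- For `v ∈ B`, the union of the components of `G - v` that do not meet `B`. -/
def pendantPart (G : SimpleGraph V) (B : Set V) (v : V) : Set V :=
  {w | w ≠ v ∧ ∀ b ∈ B, b ≠ v → ∀ p : G.Walk w b, v ∈ p.support}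

lemma notMem_of_mem_pendantPart (hw : w ∈ pendantPart G B v) : w ∉ B := by
  intro hwB
  have hvw := hw.2 w hwB hw.1 Walk.nil
  rw [Walk.support_nil, List.mem_singleton] at hvw
  exact hw.1 hvw.symm

lemma mem_pendantPart_of_adj (hw : w ∈ pendantPart G B v) (hwz : G.Adj w z) (hz : z ≠ v) :
    z ∈ pendantPart G B v :=
  ⟨hz, fun b hb hbv p => by
    simpa [Walk.support_cons, Ne.symm hw.1] using hw.2 b hb hbv (p.cons hwz)⟩

lemma eq_of_mem_pendantPart_of_mem_pendantPart (hG : G.Preconnected) (hu : u ∈ B) (hv : v ∈ B)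
    (hwu : w ∈ pendantPart G B u) (hwv : w ∈ pendantPart G B v) : u = v := by
  classical
  by_contra huv
  obtain ⟨p, hp⟩ := (hG w u).some.toPath
  have hvp : v ∈ p.support := hwv.2 u hu huv p
  exact huv (hp.eq_of_mem_takeUntil_of_mem_dropUntil hvp (hwu.2 v hv (Ne.symm huv) _)
    (p.dropUntil v hvp).end_mem_support)

lemma IsBlock.pendantPart_nonempty (hB : IsBlock G B) (hBn : B.Nontrivial)
    (hcut : IsCutVertex G v) : (pendantPart G B v).Nonempty := by
  obtain ⟨-, -, hdisc⟩ := hcut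
  obtain ⟨b₀, hb₀, hb₀v⟩ := hBn.exists_ne v
  by_contra hempty
  refine hdisc ((connected_iff_exists_forall_reachable _).2 ⟨⟨b₀, hb₀v⟩, fun ⟨u, hu⟩ => ?_⟩)
  have hu' : u ∉ pendantPart G B v := fun h => hempty ⟨u, h⟩
  simp only [pendantPart, Set.mem_ofPred_eq, not_and, not_forall] at hu'
  obtain ⟨b, hb, hbv, p, hpv⟩ := hu' hu
  have hub : (G.induce {u | u ≠ v}).Reachable ⟨u, hu⟩ ⟨b, hbv⟩ :=
    ⟨p.induce _ fun x hx (hxv : x = v) => hpv (hxv ▸ hx)⟩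
  have hb₀b : (G.induce {u | u ≠ v}).Reachable ⟨b₀, hb₀v⟩ ⟨b, hbv⟩ :=
    ((hB.connected_induce_sdiff hBn v).preconnected ⟨b₀, hb₀, hb₀v⟩ ⟨b, hb, hbv⟩).map
      (G.induceHomOfLE fun x hx => hx.2).toHom
  exact hb₀b.trans hub.symm

lemma IsBlock.mem_of_adj_of_notMem_pendantPart (hB : IsBlock G B) (hBn : B.Nontrivial)
    (hv : v ∈ B) (hvz : G.Adj v z) (hz : z ∉ pendantPart G B v) : z ∈ B := by
  classical
  simp only [pendantPart, Set.mem_ofPred_eq, not_and, not_forall] at hz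
  obtain ⟨b, hb, hbv, p, hpv⟩ := hz hvz.ne'
  have hq : v ∉ (p.toPath : G.Walk z b).support := fun h =>
    hpv (p.support_toPath_subset_support h)
  exact hB.support_subset_of_isPath hBn ((p.toPath.2).cons hq (h := hvz)) hv hb z (by simp)

lemma IsBlock.mem_of_squareAdj_of_mem_pendantPart (hB : IsBlock G B) (hBn : B.Nontrivial)
    (hv : v ∈ B) (hw : w ∈ pendantPart G B v) (hzw : (GraphSquare G).Adj z w)
    (hz : z ∉ pendantPart G B v) : z ∈ B := by
  obtain ⟨-, hzw | ⟨m, hzm, hmw⟩⟩ := hzw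
  · obtain rfl : z = v := by_contra fun h => hz (mem_pendantPart_of_adj hw hzw.symm h)
    exact hv
  by_cases hmv : m = v
  · subst hmv
    exact hB.mem_of_adj_of_notMem_pendantPart hBn hv hzm.symm hz
  · obtain rfl : z = v := by_contra fun h =>
      hz (mem_pendantPart_of_adj (mem_pendantPart_of_adj hw hmw.symm hmv) hzm.symm h)
    exact hv

theorem IsBlock.not_hasHamiltonianPath_square (hG : G.Connected) (hB : IsBlock G B)
    (hBfin : B.Finite) (hBn : B.Nontrivial) (hcut : ∀ v ∈ B, IsCutVertex G v) {x y : V}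
    (hx : x ∈ B) (hy : y ∈ B) : ¬ HasHamiltonianPath (GraphSquare G) x y := by
  classical
  rintro ⟨p, hp⟩
  obtain ⟨v, hv, hvp⟩ := hp.isPath.exists_forall_notMem_support hBfin (S := pendantPart G B)
    (fun u hu v hv huv => Set.disjoint_left.2 fun w hwu hwv =>
      huv (eq_of_mem_pendantPart_of_mem_pendantPart hG.preconnected hu hv hwu hwv))
    (fun v hv w hw z => hB.mem_of_squareAdj_of_mem_pendantPart hBn hv hw)
    (fun v _ h => notMem_of_mem_pendantPart h hx) hy
  obtain ⟨w, hw⟩ := hB.pendantPart_nonempty hBn (hcut v hv)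
  exact hvp w hw (hp.mem_support w)

end Pendant

theorem square_not_hamiltonian_connected_of_cycle_block_general
    (G : SimpleGraph V) (hG : G.Connected)
    (r : ℕ) (hr : 3 ≤ r) (B : Set V) (hB : IsBlock G B)
    (hiso : Nonempty (G.induce B ≃g cycleGraph r))
    (hcut : ∀ v ∈ B, IsCutVertex G v) :
    (∀ x ∈ B, ∀ y ∈ B, x ≠ y → ¬ HasHamiltonianPath (GraphSquare G) x y) ∧
      ¬ HamiltonianConnected (GraphSquare G) := by
  obtain ⟨e⟩ := hiso
  have hcard : B.ncard = r := by
    rw [← Nat.card_coe_set_eq, Nat.card_congr e.toEquiv, Nat.card_fin]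
  obtain ⟨hBn, hBfin⟩ := Set.one_lt_ncard_iff_nontrivial_and_finite.1 (by omega : 1 < B.ncard)
  have hpath : ∀ x ∈ B, ∀ y ∈ B, x ≠ y → ¬ HasHamiltonianPath (GraphSquare G) x y :=
    fun _ hx _ hy _ => hB.not_hasHamiltonianPath_square hG hBfin hBn hcut hx hy
  refine ⟨hpath, fun hHC => ?_⟩
  obtain ⟨x, hx, y, hy, hxy⟩ := hBn
  exact hpath x hx y hy hxy (hHC x y hxy)

/-- Let `r ≥ 3` and let `G` be a connected graph containing a cycle `C_r` as a block all of
whose `r` vertices are cutvertices of `G`. Then for any two distinct vertices `x`, `y` of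
this cycle there is no `xy`-hamiltonian path in `G²`; in particular `G²` is not hamiltonian
connected. -/
theorem square_not_hamiltonian_connected_of_cycle_block [Fintype V]
    (G : SimpleGraph V) (hG : G.Connected)
    (r : ℕ) (hr : 3 ≤ r) (B : Set V) (hB : IsBlock G B)
    (hiso : Nonempty (G.induce B ≃g cycleGraph r))
    (hcut : ∀ v ∈ B, IsCutVertex G v) :
    (∀ x ∈ B, ∀ y ∈ B, x ≠ y → ¬ HasHamiltonianPath (GraphSquare G) x y) ∧
      ¬ HamiltonianConnected (GraphSquare G) :=
  square_not_hamiltonian_connected_of_cycle_block_general G hG r hr B hB hiso hcut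
end
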